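/- Let H be a k-uniform hypergraph with finitely many edges, k ≥ 1, i.e., every edge is a set of exactly k vertices. If every edge of H intersects at most 2^{k−1}/e − 1 other edges (where e is Euler's number), then there is a 2-coloring of the vertices of H in which no edge is monochromatic. -/

import Mathlib

/-!
Counting form of the Lovász Local Lemma. Let `N S` be the number of outcomes avoiding all bad
events indexed by `S`. Strong induction on `|S|` gives `N (insert i S) ≥ (1 - x i) * N S`, hence
`N I ≥ ∏ (1 - x i) * |Ω| > 0`.

For the hypergraph, the outcomes are the red sets `red ⊆ ⋃ H` and `x = exp 1 / 2^(k-1)`. Of the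
`2^k` colorings of an edge `e`, exactly two make it monochromatic, whatever the colors outside
`e`; so given that the edges disjoint from `e` are not monochromatic, `e` is monochromatic with
probability `2^(1-k) ≤ x (1 - x)^d`, the last step because `(1 - x)^d ≥ exp (-1)` once
`x (d+1) ≤ 1`.
-/

open Finset

section LocalLemma

variable {α ι : Type*}

lemma prod_one_sub_mul_le_of_le_insert [DecidableEq ι] (f : Finset ι → ℝ) (x : ι → ℝ)
    (R T : Finset ι) (hx : ∀ j ∈ T, x j ≤ 1)
    (hf : ∀ U ⊆ T, ∀ j ∈ T, j ∉ U → (1 - x j) * f (R ∪ U) ≤ f (R ∪ insert j U)) :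
    (∏ j ∈ T, (1 - x j)) * f R ≤ f (R ∪ T) := by
  induction T using Finset.induction_on with
  | empty => simp
  | insert j T hjT ih =>
    have ih := ih (fun i hi => hx i (mem_insert_of_mem hi))
      (fun U hU i hi hiU => hf U (hU.trans (subset_insert _ _)) i (mem_insert_of_mem hi) hiU)
    calc (∏ i ∈ insert j T, (1 - x i)) * f R
        = (1 - x j) * ((∏ i ∈ T, (1 - x i)) * f R) := by
          rw [prod_insert hjT, mul_assoc]
      _ ≤ (1 - x j) * f (R ∪ T) :=
          mul_le_mul_of_nonneg_left ih (sub_nonneg.2 (hx j (mem_insert_self j T)))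
      _ ≤ f (R ∪ insert j T) := hf T (subset_insert _ _) j (mem_insert_self j T) hjT

lemma prod_one_sub_le_prod_one_sub_of_subset {x : ι → ℝ} {s t : Finset ι} (h : s ⊆ t)
    (hx : ∀ j ∈ t, 0 ≤ x j ∧ x j ≤ 1) : ∏ j ∈ t, (1 - x j) ≤ ∏ j ∈ s, (1 - x j) :=
  prod_le_prod_of_subset_of_le_one h (fun j hj => by linarith [hx j hj])
    fun j hj _ => by linarith [hx j hj]

variable (Ω : Finset α) (A : ι → α → Prop) [∀ i, DecidablePred (A i)]

def avoiding (S : Finset ι) : Finset α :=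
  Ω.filter fun ω => ∀ i ∈ S, ¬A i ω

variable {Ω A}

lemma avoiding_anti {S T : Finset ι} (h : S ⊆ T) : avoiding Ω A T ⊆ avoiding Ω A S :=
  monotone_filter_right _ fun _ _ hT i hi => hT i (h hi)

@[simp]
lemma avoiding_empty : avoiding Ω A ∅ = Ω :=
  filter_true_of_mem fun _ _ _ h => absurd h (notMem_empty _)

variable [DecidableEq ι]

lemma avoiding_insert (S : Finset ι) (i : ι) :
    avoiding Ω A (insert i S) = (avoiding Ω A S).filter fun ω => ¬A i ω := by
  ext ω
  simp only [avoiding, mem_filter, forall_mem_insert]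
  tauto

lemma card_avoiding_insert (S : Finset ι) (i : ι) :
    (#(avoiding Ω A (insert i S)) : ℝ) =
      #(avoiding Ω A S) - #((avoiding Ω A S).filter (A i)) := by
  rw [eq_sub_iff_add_eq, avoiding_insert, add_comm]
  exact_mod_cast card_filter_add_card_filter_not _

variable (I : Finset ι) (Γ : ι → Finset ι) (x : ι → ℝ)

theorem one_sub_mul_card_avoiding_le_card_avoiding_insert
    (hΓ : ∀ i ∈ I, Γ i ⊆ I) (hx : ∀ i ∈ I, 0 ≤ x i ∧ x i ≤ 1)
    (hA : ∀ i ∈ I, ∀ S ⊆ I, Disjoint S (insert i (Γ i)) →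
      (#((avoiding Ω A S).filter (A i)) : ℝ) ≤
        x i * (∏ j ∈ Γ i, (1 - x j)) * #(avoiding Ω A S))
    (S : Finset ι) (hS : S ⊆ I) (i : ι) (hi : i ∈ I) :
    (1 - x i) * #(avoiding Ω A S) ≤ #(avoiding Ω A (insert i S)) := by
  induction S using Finset.strongInduction generalizing i with
  | H S ih =>
  by_cases hiS : i ∈ S
  · rw [insert_eq_of_mem hiS]
    exact mul_le_of_le_one_left (Nat.cast_nonneg _) (by linarith [hx i hi])
  -- `A i` is controlled given the events of `S₂` by `hA`; adding back those of `S₁`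
  -- costs at most the factor `∏ j ∈ S₁, (1 - x j)`, by the induction hypothesis.
  set S₁ := S.filter (· ∈ Γ i)
  set S₂ := S.filter (· ∉ Γ i)
  have hS₂ : Disjoint S₂ (insert i (Γ i)) := by
    simp only [S₂, disjoint_left, mem_filter, mem_insert]
    rintro j ⟨hjS, hjΓ⟩ (rfl | hj)
    exacts [hiS hjS, hjΓ hj]
  have hgrow : (∏ j ∈ S₁, (1 - x j)) * #(avoiding Ω A S₂) ≤ (#(avoiding Ω A S) : ℝ) := by
    have key := prod_one_sub_mul_le_of_le_insert (fun T => (#(avoiding Ω A T) : ℝ)) x S₂ S₁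
      (fun j hj => (hx j (hS (filter_subset _ _ hj))).2) fun U hU j hj hjU => by
        have hsub : S₂ ∪ U ⊂ S := (ssubset_iff_of_subset
            (union_subset (filter_subset _ _) (hU.trans (filter_subset _ _)))).2
          ⟨j, filter_subset _ _ hj, by simp [hjU, (mem_filter.1 hj).2]⟩
        rw [union_insert]
        exact ih _ hsub (hsub.subset.trans hS) j (hS (filter_subset _ _ hj))
    rwa [union_comm, filter_union_filter_not_eq] at key
  have hbad : (#((avoiding Ω A S).filter (A i)) : ℝ) ≤ x i * #(avoiding Ω A S) :=
    calc (#((avoiding Ω A S).filter (A i)) : ℝ)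
        ≤ #((avoiding Ω A S₂).filter (A i)) := by
          gcongr; exact avoiding_anti (filter_subset _ _)
      _ ≤ x i * (∏ j ∈ Γ i, (1 - x j)) * #(avoiding Ω A S₂) :=
          hA i hi S₂ ((filter_subset _ _).trans hS) hS₂
      _ ≤ x i * ((∏ j ∈ S₁, (1 - x j)) * #(avoiding Ω A S₂)) := by
          rw [mul_assoc]
          refine mul_le_mul_of_nonneg_left (mul_le_mul_of_nonneg_right ?_ (Nat.cast_nonneg _))
            (hx i hi).1
          exact prod_one_sub_le_prod_one_sub_of_subset (fun j hj => (mem_filter.1 hj).2)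
            fun j hj => hx j (hΓ i hi hj)
      _ ≤ x i * #(avoiding Ω A S) := mul_le_mul_of_nonneg_left hgrow (hx i hi).1
  rw [card_avoiding_insert]
  linarith

theorem lovasz_local_lemma (hΩ : Ω.Nonempty) (hΓ : ∀ i ∈ I, Γ i ⊆ I)
    (hx : ∀ i ∈ I, 0 ≤ x i ∧ x i < 1)
    -- Conditional form of "A i is independent of the events outside its neighbourhood Γ i":
    -- P(A i | no A j, j ∈ S) ≤ x i ∏_{j ∈ Γ i} (1 - x j) whenever S avoids i and Γ i.
    (hA : ∀ i ∈ I, ∀ S ⊆ I, Disjoint S (insert i (Γ i)) →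
      (#((avoiding Ω A S).filter (A i)) : ℝ) ≤
        x i * (∏ j ∈ Γ i, (1 - x j)) * #(avoiding Ω A S)) :
    (avoiding Ω A I).Nonempty := by
  have hx' : ∀ i ∈ I, 0 ≤ x i ∧ x i ≤ 1 := fun i hi => ⟨(hx i hi).1, (hx i hi).2.le⟩
  have key := prod_one_sub_mul_le_of_le_insert (fun T => (#(avoiding Ω A T) : ℝ)) x ∅ I
    (fun i hi => (hx' i hi).2) fun U hU i hi _ => by
      simpa only [empty_union] using
        one_sub_mul_card_avoiding_le_card_avoiding_insert I Γ x hΓ hx' hA U hU i hi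
  have hpos : (0 : ℝ) < (∏ i ∈ I, (1 - x i)) * #(avoiding Ω A ∅) := by
    rw [avoiding_empty]
    exact mul_pos (prod_pos fun i hi => by linarith [hx i hi]) (by exact_mod_cast hΩ.card_pos)
  rw [empty_union] at key
  exact card_pos.1 (by exact_mod_cast hpos.trans_le key)

end LocalLemma

section Hypergraph

variable {V : Type*} [DecidableEq V]

lemma card_filter_powerset_union (u v : Finset V) (huv : Disjoint u v)
    (p q : Finset V → Prop) [DecidablePred p] [DecidablePred q] :
    #((u ∪ v).powerset.filter fun c => p (c ∩ u) ∧ q (c ∩ v))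
      = #(u.powerset.filter p) * #(v.powerset.filter q) := by
  have hu : ∀ a ⊆ u, ∀ b ⊆ v, (a ∪ b) ∩ u = a := fun a ha b hb => by
    rw [union_inter_distrib_right, inter_eq_left.2 ha,
      disjoint_iff_inter_eq_empty.1 (disjoint_of_subset_left hb huv.symm), union_empty]
  have hv : ∀ a ⊆ u, ∀ b ⊆ v, (a ∪ b) ∩ v = b := fun a ha b hb => by
    rw [union_comm, union_inter_distrib_right, inter_eq_left.2 hb,
      disjoint_iff_inter_eq_empty.1 (disjoint_of_subset_left ha huv), union_empty]
  rw [← card_product]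
  refine card_nbij' (fun c => (c ∩ u, c ∩ v)) (fun ab => ab.1 ∪ ab.2) ?_ ?_ ?_ ?_ <;>
    simp only [Set.MapsTo, Set.LeftInvOn, mem_coe, mem_filter, mem_product, mem_powerset,
      Prod.forall, and_imp]
  · exact fun c _ hp hq => ⟨⟨inter_subset_right, hp⟩, inter_subset_right, hq⟩
  · exact fun a b ha hp hb hq =>
      ⟨union_subset_union ha hb, by rwa [hu a ha b hb], by rwa [hv a ha b hb]⟩
  · exact fun c hc _ _ => by rw [← inter_union_distrib_left, inter_eq_left.2 hc]
  · exact fun a b ha _ hb _ => by rw [hu a ha b hb, hv a ha b hb]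

/-- A 2-coloring is encoded by its set `red` of red vertices. -/
def IsMonochromatic (e red : Finset V) : Prop := e ⊆ red ∨ Disjoint e red

instance (e : Finset V) : DecidablePred (IsMonochromatic e) := fun _ => by
  unfold IsMonochromatic; infer_instance

lemma isMonochromatic_of_forall_decide_eq {e red : Finset V} {b : Bool}
    (h : ∀ v ∈ e, decide (v ∈ red) = b) : IsMonochromatic e red := by
  cases b
  · exact Or.inr (disjoint_left.2 fun v hv => by simpa using h v hv)
  · exact Or.inl fun v hv => by simpa using h v hv

lemma isMonochromatic_inter_iff {e u : Finset V} (h : e ⊆ u) (red : Finset V) :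
    IsMonochromatic e (red ∩ u) ↔ IsMonochromatic e red := by
  simp only [IsMonochromatic, subset_inter_iff, h, and_true, disjoint_left, mem_inter]
  exact or_congr_right (forall₂_congr fun a ha => by simp [h ha])

lemma card_filter_isMonochromatic_powerset {e : Finset V} (he : e.Nonempty) :
    #(e.powerset.filter (IsMonochromatic e)) = 2 := by
  have : e.powerset.filter (IsMonochromatic e) = {e, ∅} := by
    ext a
    simp only [IsMonochromatic, mem_filter, mem_powerset, mem_insert, mem_singleton]
    constructor
    · rintro ⟨hae, hea | hdisj⟩
      exacts [Or.inl (Subset.antisymm hae hea), Or.inr (disjoint_self.1 (hdisj.mono_left hae))]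
    · rintro (rfl | rfl) <;> simp
  rw [this, card_pair he.ne_empty]

def neighborEdges (H : Finset (Finset V)) (e : Finset V) : Finset (Finset V) :=
  H.filter fun e' => e' ≠ e ∧ (e ∩ e').Nonempty

lemma card_filter_isMonochromatic_avoiding_mul {H S : Finset (Finset V)} {e : Finset V}
    (he : e ∈ H) (hne : e.Nonempty) (hSH : S ⊆ H)
    (hS : Disjoint S (insert e (neighborEdges H e))) :
    #((avoiding (H.sup id).powerset IsMonochromatic S).filter (IsMonochromatic e)) * 2 ^ (#e - 1)
      = #(avoiding (H.sup id).powerset IsMonochromatic S) := by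
  set W := H.sup id
  have hW : e ∪ W \ e = W := union_sdiff_of_subset (le_sup (f := id) he)
  have hS' : ∀ f ∈ S, f ⊆ W \ e := fun f hf => by
    have hfe := disjoint_left.1 hS hf
    simp only [neighborEdges, mem_insert, mem_filter, hSH hf, true_and, not_or, not_and] at hfe
    exact subset_sdiff.2 ⟨le_sup (f := id) (hSH hf),
      (disjoint_iff_inter_eq_empty.2 (not_nonempty_iff_eq_empty.1 (hfe.2 hfe.1))).symm⟩
  have hgood : ∀ red, (∀ f ∈ S, ¬IsMonochromatic f red) ↔
      ∀ f ∈ S, ¬IsMonochromatic f (red ∩ (W \ e)) := fun red =>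
    forall₂_congr fun f hf => by rw [isMonochromatic_inter_iff (hS' f hf)]
  set Q := #((W \ e).powerset.filter fun b => ∀ f ∈ S, ¬IsMonochromatic f b)
  have hbad : #((avoiding W.powerset IsMonochromatic S).filter (IsMonochromatic e)) = 2 * Q := by
    rw [← card_filter_isMonochromatic_powerset hne, ← card_filter_powerset_union e (W \ e)
      disjoint_sdiff, hW, avoiding, filter_filter]
    refine congrArg card (filter_congr fun red _ => ?_)
    rw [isMonochromatic_inter_iff subset_rfl, hgood, and_comm]
  have hall : #(avoiding W.powerset IsMonochromatic S) = 2 ^ #e * Q := by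
    rw [← card_powerset e, ← filter_true_of_mem (s := e.powerset) fun _ _ => trivial,
      ← card_filter_powerset_union e (W \ e) disjoint_sdiff, hW, avoiding]
    refine congrArg card (filter_congr fun red _ => ?_)
    rw [hgood, true_and]
  rw [hbad, hall, mul_right_comm, ← pow_succ', Nat.sub_add_cancel hne.card_pos]

end Hypergraph

lemma one_le_exp_one_mul_one_sub_pow {x : ℝ} {d : ℕ} (hxd : x * (d + 1) ≤ 1) :
    1 ≤ Real.exp 1 * (1 - x) ^ d := by
  rcases d.eq_zero_or_pos with rfl | hd
  · simp
  have hd : (0 : ℝ) < d := Nat.cast_pos.2 hd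
  have hbase : 1 ≤ (1 - x) * (1 + (d : ℝ)⁻¹) := by
    rw [← sub_nonneg]
    have : (1 - x) * (1 + (d : ℝ)⁻¹) - 1 = (1 - x * (d + 1)) / d := by field_simp; ring
    rw [this]
    exact div_nonneg (by linarith) hd.le
  calc 1 ≤ ((1 - x) * (1 + (d : ℝ)⁻¹)) ^ d := one_le_pow₀ hbase
    _ = (1 + (d : ℝ)⁻¹) ^ d * (1 - x) ^ d := by rw [mul_pow, mul_comm]
    _ ≤ Real.exp 1 * (1 - x) ^ d :=
        mul_le_mul_of_nonneg_right Real.one_add_inv_pow_le_exp (pow_nonneg (by nlinarith) d)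

lemma exp_one_div_two_pow_mul_le_one {n d : ℕ} (h : (d : ℝ) ≤ 2 ^ n / Real.exp 1 - 1) :
    Real.exp 1 / 2 ^ n * (d + 1) ≤ 1 := by
  rw [div_mul_eq_mul_div, div_le_one (by positivity), ← le_div_iff₀' (Real.exp_pos 1)]
  linarith

lemma exp_one_div_two_pow_lt_one {n d : ℕ} (h : (d : ℝ) ≤ 2 ^ n / Real.exp 1 - 1) :
    Real.exp 1 / 2 ^ n < 1 := by
  have hle : Real.exp 1 ≤ 2 ^ n := by
    rw [← div_le_one (by positivity)]
    nlinarith [exp_one_div_two_pow_mul_le_one h, d.cast_nonneg (α := ℝ)]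
  have hn : 2 ≤ n := by
    by_contra! hn
    have : (2 : ℝ) ^ n ≤ 2 ^ 1 := pow_le_pow_right₀ one_le_two (by omega)
    linarith [Real.exp_one_gt_d9]
  rw [div_lt_one (by positivity)]
  calc Real.exp 1 < 2 ^ 2 := by linarith [Real.exp_one_lt_d9]
    _ ≤ 2 ^ n := pow_le_pow_right₀ one_le_two hn

/-- **Hypergraph 2-coloring via the Lovász Local Lemma.**
`H` is the (finite) edge set of a `k`-uniform hypergraph on vertices `V`:
every edge is a set of exactly `k` vertices.  If every edge intersects at most
`2^{k-1} / e - 1` other edges, then there is a 2-coloring of the vertices such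
that no edge is monochromatic. -/
theorem hypergraph_two_coloring_LLL {V : Type*} [DecidableEq V] (k : ℕ) (hk : 1 ≤ k)
    (H : Finset (Finset V))
    (huniform : ∀ e ∈ H, e.card = k)
    (hdeg : ∀ e ∈ H,
      ((H.filter (fun e' => e' ≠ e ∧ (e ∩ e').Nonempty)).card : ℝ)
        ≤ 2 ^ (k - 1) / Real.exp 1 - 1) :
    ∃ c : V → Bool, ∀ e ∈ H, ¬ ∃ b : Bool, ∀ v ∈ e, c v = b := by
  set x := Real.exp 1 / 2 ^ (k - 1)
  have hx : ∀ e ∈ H, 0 ≤ x ∧ x < 1 := fun e he =>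
    ⟨by positivity, exp_one_div_two_pow_lt_one (hdeg e he)⟩
  have hA : ∀ e ∈ H, ∀ S ⊆ H, Disjoint S (insert e (neighborEdges H e)) →
      (#((avoiding (H.sup id).powerset IsMonochromatic S).filter (IsMonochromatic e)) : ℝ)
        ≤ x * (∏ _ ∈ neighborEdges H e, (1 - x)) *
          #(avoiding (H.sup id).powerset IsMonochromatic S) := by
    intro e he S hSH hS
    have hcount := card_filter_isMonochromatic_avoiding_mul he
      (card_pos.1 (by rw [huniform e he]; omega)) hSH hS
    rw [huniform e he] at hcount
    rw [← hcount, prod_const]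
    push_cast
    calc _ ≤ _ * (Real.exp 1 * (1 - x) ^ #(neighborEdges H e)) :=
          le_mul_of_one_le_right (Nat.cast_nonneg _) (one_le_exp_one_mul_one_sub_pow
            (exp_one_div_two_pow_mul_le_one (hdeg e he)))
      _ = _ := by simp only [x]; field_simp
  obtain ⟨red, hred⟩ := lovasz_local_lemma H (neighborEdges H) (fun _ => x)
    ⟨∅, empty_mem_powerset _⟩ (fun _ _ => filter_subset _ _) hx hA
  exact ⟨(· ∈ red), fun e he ⟨_, hb⟩ =>
    (mem_filter.1 hred).2 e he (isMonochromatic_of_forall_decide_eq hb)⟩
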